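/- In the security second routing model, for any destination d, attacker m, source AS s, and any deployment S of secure ASes, the stable route of s has the same relationship type (customer, peer, or provider) as every route in BPR(s, ∅, m, d). -/

import Mathlib

open scoped Classical

namespace SBGP

/-- Business relationship of a neighbor, from the point of view of a given AS. -/
inductive Rel
  | customer
  | peer
  | provider
deriving DecidableEq

/-- The three positions at which the secure-route preference step can be inserted. -/
inductive SecModel
  | first
  | second
  | third
deriving DecidableEq

/-- An AS-level graph with business relationships on its edges. -/
structure ASGraph (V : Type*) where
  adj : V → V → Bool
  /-- `rel u v` is the relationship of `v` as seen from `u`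
      (`customer` means `v` is `u`'s customer, etc.). -/
  rel : V → V → Rel
  adj_symm : ∀ u v, adj u v = adj v u
  adj_irrefl : ∀ v, adj v v = false
  rel_consistent : ∀ u v, adj u v = true →
    ((rel u v = Rel.customer ↔ rel v u = Rel.provider) ∧
     (rel u v = Rel.peer ↔ rel v u = Rel.peer))

variable {V : Type*}

def lpRank : Rel → ℕ
  | Rel.customer => 0
  | Rel.peer => 1
  | Rel.provider => 2

/-- The relationship of the next hop of a route (`none` for trivial routes). -/
def nextRel (G : ASGraph V) : List V → Option Rel
  | a :: b :: _ => some (G.rel a b)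
  | _ => none

/-- Local-preference value of a route (customer < peer < provider). -/
def lpVal (G : ASGraph V) : List V → ℕ
  | a :: b :: _ => lpRank (G.rel a b)
  | _ => 0

/-- `R` is a (nonempty) path in `G`. -/
def IsPath (G : ASGraph V) : List V → Prop
  | [] => False
  | [_] => True
  | a :: b :: rest => G.adj a b = true ∧ IsPath G (b :: rest)

/-- `R` is a simple route in `G` ending at `d`. -/
def IsRouteTo (G : ASGraph V) (R : List V) (d : V) : Prop :=
  R.Nodup ∧ IsPath G R ∧ R.getLast? = some d

/-- The export rule (Ex) along a route `a :: b :: c :: …`: each internal AS `b`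
announces its route (with next hop `c`) to `a` only if that route is a customer
route of `b`, or `a` is `b`'s customer. -/
def ExportOK (G : ASGraph V) : List V → Prop
  | a :: b :: c :: rest =>
      (G.rel b c = Rel.customer ∨ G.rel b a = Rel.customer) ∧
      ExportOK G (b :: c :: rest)
  | _ => True

/-- A route is secure iff every AS on it has deployed S*BGP and it does not
contain the attacker (the bogus route is insecure even if the attacker is in `S`). -/
def SecureRoute (S : Finset V) (m : Option V) (R : List V) : Prop :=
  (∀ v ∈ R, v ∈ S) ∧ (∀ m', m = some m' → m' ∉ R)

/-- A legitimate route: ends at the destination `d` and avoids the attacker. -/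
def LegitRoute (m : Option V) (d : V) (R : List V) : Prop :=
  R.getLast? = some d ∧ ∀ m', m = some m' → m' ∉ R

/-- Perceivable routes at `s` for destination `d` when the (optional) attacker `m`
announces the bogus path "m,d": either a genuine export-compliant route to `d`
avoiding `m`, or an export-compliant route to `m` extended by `m`'s claimed
(possibly nonexistent) edge to `d`. -/
def Perceivable (G : ASGraph V) (m : Option V) (d : V) (s : V) (R : List V) : Prop :=
  R.head? = some s ∧
  ((IsRouteTo G R d ∧ ExportOK G R ∧ ∀ m', m = some m' → m' ∉ R) ∨
   (∃ m' R', m = some m' ∧ R = R' ++ [d] ∧ IsRouteTo G R' m' ∧ d ∉ R' ∧ ExportOK G R'))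

/-- The rank of a route (smaller is better), encoding lexicographically the
ranking steps of the given security model: LP (customer > peer > provider),
SP (shorter > longer) and SecP (secure > insecure), in the order determined by
the model.  All components are `< Fintype.card V + 2`, so the encoding is
faithful on simple routes. -/
noncomputable def rankNat [Fintype V] (G : ASGraph V) (S : Finset V) (m : Option V)
    (mdl : SecModel) (R : List V) : ℕ :=
  let B := Fintype.card V + 2
  let lp := lpVal G R
  let len := R.length
  let sec : ℕ := if SecureRoute S m R then 0 else 1
  match mdl with
  | SecModel.first => sec * B * B + lp * B + len
  | SecModel.second => lp * B * B + sec * B + len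
  | SecModel.third => lp * B * B + len * B + sec

/-- `n` exports the route `R` (its currently selected route) to neighbor `s`:
always if `R` is a customer route of `n` or `n` originates `R`; otherwise only
if `s` is `n`'s customer. -/
def exportsTo (G : ASGraph V) (n s : V) : List V → Prop
  | _ :: c :: _ => G.rel n c = Rel.customer ∨ G.rel n s = Rel.customer
  | _ => True

/-- Routes available to `s` given the current selections `σ` of all ASes:
routes exported by neighbors (with BGP loop detection), together with the
attacker's bogus announcement "m,d" to each of its neighbors. -/
def Avail (G : ASGraph V) (m : Option V) (d : V) (σ : V → List V) (s : V)
    (R : List V) : Prop :=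
  (∃ n, G.adj s n = true ∧ (∀ m', m = some m' → n ≠ m') ∧ σ n ≠ [] ∧
      (σ n).head? = some n ∧ s ∉ σ n ∧ exportsTo G n s (σ n) ∧ R = s :: σ n) ∨
  (∃ m', m = some m' ∧ G.adj s m' = true ∧ s ≠ d ∧ R = [s, m', d])

/-- A stable routing state for destination `d`, secure deployment `S`,
attacker `m`, security model `mdl` and tiebreak `tb`: every AS (other than the
destination and the attacker) selects the best available route, where ties in
rank are broken by the strict tiebreak `tb`. -/
def Stable [Fintype V] (G : ASGraph V) (tb : V → List V → ℕ) (S : Finset V)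
    (m : Option V) (d : V) (mdl : SecModel) (σ : V → List V) : Prop :=
  σ d = [d] ∧
  (∀ m', m = some m' → σ m' = []) ∧
  ∀ s, s ≠ d → (∀ m', m = some m' → s ≠ m') →
    ((σ s = [] ∧ ∀ R, ¬ Avail G m d σ s R) ∨
     (Avail G m d σ s (σ s) ∧
      ∀ R, Avail G m d σ s R → R ≠ σ s →
        rankNat G S m mdl (σ s) < rankNat G S m mdl R ∨
        (rankNat G S m mdl (σ s) = rankNat G S m mdl R ∧ tb s (σ s) < tb s R)))

/-- `s` is happy: it selects a legitimate route to `d`, avoiding the attacker. -/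
def Happy (m : Option V) (d : V) (σ : V → List V) (s : V) : Prop :=
  σ s ≠ [] ∧ (σ s).getLast? = some d ∧ ∀ m', m = some m' → m' ∉ σ s

/-- The set of most-preferred perceivable routes of `s` (before the tiebreak step). -/
def BPR [Fintype V] (G : ASGraph V) (S : Finset V) (m : Option V) (d : V)
    (mdl : SecModel) (s : V) (R : List V) : Prop :=
  Perceivable G m d s R ∧
  ∀ R', Perceivable G m d s R' → rankNat G S m mdl R ≤ rankNat G S m mdl R'

/-- The number of happy source ASes (sources other than `m` and `d`). -/
noncomputable def happyCount [Fintype V] [DecidableEq V] (m d : V)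
    (σ : V → List V) : ℕ :=
  (Finset.univ.filter fun s => s ≠ m ∧ s ≠ d ∧ Happy (some m) d σ s).card

/-- The customer-provider hierarchy is acyclic. -/
def Hierarchy (G : ASGraph V) : Prop :=
  ∃ h : V → ℕ, ∀ u v, G.adj u v = true → G.rel u v = Rel.customer → h v < h u

/-- The tiebreak of every AS is deterministic (injective on routes). -/
def InjTB (tb : V → List V → ℕ) : Prop :=
  ∀ s, Function.Injective (tb s)

end SBGP
namespace SBGP

/-!
The relationship type of a route is its LP class and LP dominates the ranking of the second model,
so it suffices to compare LP values. The stable route `σ s` is itself perceivable, so the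
minimality of `R` gives `lpVal R ≤ lpVal (σ s)`, whatever `S` is. Conversely, induction along any
perceivable route `s, n, …` shows that `σ s` is at least as good in LP: `σ n` is at least as good
as the tail, so `n` exports it to `s`; then either `s :: σ n` is available to `s`, or `s` already
lies on `σ n`, and `σ s` is a suffix of a route that `n` exports to `s`, hence a customer route
unless `n` is a provider of `s`.
-/

section

variable {V : Type*}

section Relationships

variable {G : ASGraph V}

lemma lpRank_le_two (r : Rel) : lpRank r ≤ 2 := by
  cases r <;> decide

lemma lpRank_eq_zero_iff {r : Rel} : lpRank r = 0 ↔ r = Rel.customer := by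
  cases r <;> decide

lemma lpRank_injective : Function.Injective lpRank := by
  intro r r'
  cases r <;> cases r' <;> decide

lemma lpVal_le_two (G : ASGraph V) : ∀ R : List V, lpVal G R ≤ 2
  | [] | [_] => Nat.zero_le 2
  | _ :: _ :: _ => lpRank_le_two _

lemma ASGraph.rel_eq_provider_of_rel_eq_customer (G : ASGraph V) {u v : V}
    (h : G.adj u v = true) (hc : G.rel v u = Rel.customer) : G.rel u v = Rel.provider :=
  (G.rel_consistent v u (by rwa [G.adj_symm])).1.mp hc

lemma lpVal_eq_zero_of_exportsTo {n x : V} {t : List V} (hexp : exportsTo G n x (n :: t))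
    (hx : G.rel n x ≠ Rel.customer) : lpVal G (n :: t) = 0 := by
  match t, hexp with
  | [], _ => rfl
  | _ :: _, hexp => exact lpRank_eq_zero_iff.mpr (hexp.resolve_right hx)

lemma exportsTo_of_lpVal_le {n x : V} {t u : List V}
    (hle : lpVal G (n :: t) ≤ lpVal G (n :: u)) (hexp : exportsTo G n x (n :: u)) :
    exportsTo G n x (n :: t) := by
  match t with
  | [] => trivial
  | _ :: _ =>
    by_cases hx : G.rel n x = Rel.customer
    · exact Or.inr hx
    · rw [lpVal_eq_zero_of_exportsTo hexp hx, Nat.le_zero] at hle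
      exact Or.inl (lpRank_eq_zero_iff.mp hle)

lemma ExportOK.tail {a b : V} {t : List V} (h : ExportOK G (a :: b :: t)) :
    ExportOK G (b :: t) := by
  match t, h with
  | [], _ => trivial
  | _ :: _, h => exact h.2

lemma ExportOK.head_exportsTo {a b : V} {t : List V} (h : ExportOK G (a :: b :: t)) :
    exportsTo G b a (b :: t) := by
  match t, h with
  | [], _ => trivial
  | _ :: _, h => exact h.1

lemma ExportOK.cons {x n : V} {t : List V} (h : ExportOK G (n :: t))
    (hexp : exportsTo G n x (n :: t)) : ExportOK G (x :: n :: t) := by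
  match t with
  | [] => trivial
  | _ :: _ => exact ⟨hexp, h⟩

lemma IsRouteTo.tail {a b d : V} {t : List V} (h : IsRouteTo G (a :: b :: t) d) :
    IsRouteTo G (b :: t) d :=
  ⟨h.1.of_cons, h.2.1.2, List.getLast?_cons_cons ▸ h.2.2⟩

lemma IsRouteTo.cons {x n d : V} {t : List V} (h : IsRouteTo G (n :: t) d)
    (hadj : G.adj x n = true) (hx : x ∉ n :: t) : IsRouteTo G (x :: n :: t) d :=
  ⟨List.nodup_cons.2 ⟨hx, h.1⟩, ⟨hadj, h.2.1⟩, by rw [List.getLast?_cons_cons]; exact h.2.2⟩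

end Relationships

section Rank

variable [Fintype V] {G : ASGraph V} {S : Finset V} {m : Option V} {mdl : SecModel}

lemma lpVal_mul_le_rankNat (hmdl : mdl ≠ SecModel.first) (R : List V) :
    lpVal G R * (Fintype.card V + 2) * (Fintype.card V + 2) ≤ rankNat G S m mdl R := by
  cases mdl
  · exact absurd rfl hmdl
  all_goals simp only [rankNat]; omega

lemma rankNat_lt_succ_lpVal_mul (hmdl : mdl ≠ SecModel.first) {R : List V}
    (hR : R.length < Fintype.card V + 2) :
    rankNat G S m mdl R < (lpVal G R + 1) * (Fintype.card V + 2) * (Fintype.card V + 2) := by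
  cases mdl
  · exact absurd rfl hmdl
  all_goals
    simp only [rankNat]
    split_ifs <;> nlinarith

/-- LP is the leading digit in base `Fintype.card V + 2`. -/
lemma lpVal_le_of_rankNat_le (hmdl : mdl ≠ SecModel.first) {X Y : List V}
    (hY : Y.length ≤ Fintype.card V) (h : rankNat G S m mdl X ≤ rankNat G S m mdl Y) :
    lpVal G X ≤ lpVal G Y := by
  have := ((lpVal_mul_le_rankNat hmdl X).trans h).trans_lt
    (rankNat_lt_succ_lpVal_mul hmdl (by omega))
  exact Nat.lt_succ_iff.mp (Nat.lt_of_mul_lt_mul_right (Nat.lt_of_mul_lt_mul_right this))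

end Rank

section Perceivable

variable {G : ASGraph V} {d : V}

lemma Perceivable.nodup {m : Option V} {s : V} {R : List V} (h : Perceivable G m d s R) :
    R.Nodup := by
  rcases h.2 with ⟨hR, -, -⟩ | ⟨_, R', -, rfl, hR', hd, -⟩
  · exact hR.1
  · exact hR'.1.append (List.nodup_singleton d) (by simpa using hd)

lemma Perceivable.length_le [Fintype V] {m : Option V} {s : V} {R : List V}
    (h : Perceivable G m d s R) : R.length ≤ Fintype.card V :=
  h.nodup.length_le_card

lemma Perceivable.eq_singleton_dest {m : Option V} {R : List V}
    (h : Perceivable G m d d R) : R = [d] := by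
  obtain ⟨t, rfl⟩ := List.head?_eq_some_iff.1 h.1
  rcases h.2 with ⟨hR, -, -⟩ | ⟨_, R', -, hReq, hR', hd, -⟩
  · cases t with
    | nil => rfl
    | cons b t =>
      exact absurd (List.mem_of_getLast? (List.getLast?_cons_cons ▸ hR.2.2))
        (List.nodup_cons.1 hR.1).1
  · cases R' with
    | nil => exact hR'.2.1.elim
    | cons a t' =>
      obtain ⟨rfl, -⟩ := List.cons.inj hReq
      exact absurd List.mem_cons_self hd

lemma Perceivable.exists_eq_cons_cons {m : Option V} {s : V} {R : List V}
    (h : Perceivable G m d s R) (hsd : s ≠ d) : ∃ n t, R = s :: n :: t := by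
  obtain ⟨t, rfl⟩ := List.head?_eq_some_iff.1 h.1
  rcases h.2 with ⟨hR, -, -⟩ | ⟨_, R', -, hReq, -, -, -⟩
  · cases t with
    | nil => exact absurd (by simpa using hR.2.2) hsd
    | cons n t => exact ⟨n, t, rfl⟩
  · cases t with
    | nil => exact absurd (List.append_eq_singleton_iff.1 hReq.symm) (by simp [hsd.symm])
    | cons n t => exact ⟨n, t, rfl⟩

lemma Perceivable.nextRel_eq_of_lpVal_eq {m : Option V} {s : V} {R R' : List V}
    (h : Perceivable G m d s R) (h' : Perceivable G m d s R')
    (hlp : lpVal G R = lpVal G R') : nextRel G R = nextRel G R' := by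
  by_cases hsd : s = d
  · subst hsd
    rw [h.eq_singleton_dest, h'.eq_singleton_dest]
  · obtain ⟨n, t, rfl⟩ := h.exists_eq_cons_cons hsd
    obtain ⟨n', t', rfl⟩ := h'.exists_eq_cons_cons hsd
    exact congrArg some (lpRank_injective hlp)

variable {m : V}

lemma perceivable_dest (hmd : m ≠ d) : Perceivable G (some m) d d [d] :=
  ⟨rfl, Or.inl ⟨⟨List.nodup_singleton d, trivial, rfl⟩, trivial,
    by rintro _ ⟨⟩; simpa using hmd⟩⟩

lemma perceivable_bogus {x : V} (hadj : G.adj x m = true) (hxm : x ≠ m) (hxd : x ≠ d)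
    (hmd : m ≠ d) : Perceivable G (some m) d x [x, m, d] :=
  ⟨rfl, Or.inr ⟨m, [x, m], rfl, rfl, ⟨by simp [hxm], ⟨hadj, trivial⟩, rfl⟩,
    by simp [hxd.symm, hmd.symm], trivial⟩⟩

lemma Perceivable.cons {x n : V} {t : List V} (h : Perceivable G (some m) d n (n :: t))
    (hadj : G.adj x n = true) (hx : x ∉ n :: t) (hxm : x ≠ m)
    (hexp : exportsTo G n x (n :: t)) : Perceivable G (some m) d x (x :: n :: t) := by
  refine ⟨rfl, ?_⟩
  rcases h.2 with ⟨hR, hexpok, hm⟩ | ⟨_, R', ⟨⟩, hReq, hR', hd, hexpok⟩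
  · refine Or.inl ⟨hR.cons hadj hx, hexpok.cons hexp, ?_⟩
    rintro _ ⟨⟩
    simpa [Ne.symm hxm] using hm m rfl
  · cases R' with
    | nil => exact hR'.2.1.elim
    | cons a t' =>
      simp only [List.cons_append, List.cons.injEq] at hReq
      obtain ⟨rfl, rfl⟩ := hReq
      have hxt' : x ∉ n :: t' := fun hmem => hx (by simp_all)
      have hexp' : exportsTo G n x (n :: t') := by
        cases t' with
        | nil => trivial
        | cons _ _ => exact hexp
      refine Or.inr ⟨m, x :: n :: t', rfl, rfl, hR'.cons hadj hxt', ?_, hexpok.cons hexp'⟩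
      intro hmem
      rcases List.mem_cons.1 hmem with rfl | hmem
      · exact hx (by simp)
      · exact hd hmem

lemma Perceivable.cases_cons {s : V} {R : List V} (h : Perceivable G (some m) d s R)
    (hsd : s ≠ d) (hsm : s ≠ m) :
    (∃ n t, R = s :: n :: t ∧ G.adj s n = true ∧ n ≠ m ∧ exportsTo G n s (n :: t) ∧
        Perceivable G (some m) d n (n :: t)) ∨
      (R = [s, m, d] ∧ G.adj s m = true) := by
  obtain ⟨n, t, rfl⟩ := h.exists_eq_cons_cons hsd
  rcases h.2 with ⟨hR, hexpok, hm⟩ | ⟨_, R', ⟨⟩, hReq, hR', hd, hexpok⟩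
  · have hnm : n ≠ m := fun hn => hm m rfl (by simp [hn])
    refine Or.inl ⟨n, t, rfl, hR.2.1.1, hnm, hexpok.head_exportsTo, rfl,
      Or.inl ⟨hR.tail, hexpok.tail, ?_⟩⟩
    rintro _ ⟨⟩ hmem
    exact hm m rfl (List.mem_cons_of_mem _ hmem)
  · match R', hReq, hR' with
    | [], _, hR' => exact hR'.2.1.elim
    | [_], hReq, hR' =>
      simp only [List.cons_append, List.cons.injEq] at hReq
      exact absurd (by simpa [hReq.1] using hR'.2.2) hsm
    | [_, _], hReq, hR' =>
      simp only [List.cons_append, List.cons.injEq] at hReq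
      obtain ⟨rfl, rfl, rfl⟩ := hReq
      obtain rfl : n = m := by simpa using hR'.2.2
      exact Or.inr ⟨rfl, hR'.2.1.1⟩
    | _ :: _ :: c :: t', hReq, hR' =>
      simp only [List.cons_append, List.cons.injEq] at hReq
      obtain ⟨rfl, rfl, rfl⟩ := hReq
      have hnm : n ≠ m := by
        rintro rfl
        exact (List.nodup_cons.1 hR'.tail.1).1 (List.mem_of_getLast? (by simpa using hR'.2.2))
      refine Or.inl ⟨n, c :: t' ++ [d], rfl, hR'.2.1.1, hnm, hexpok.head_exportsTo, rfl,
        Or.inr ⟨m, n :: c :: t', rfl, rfl, hR'.tail, fun hmem => hd (List.mem_cons_of_mem _ hmem),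
          hexpok.tail⟩⟩

end Perceivable

section Avail

variable {G : ASGraph V} {m d x : V} {σ : V → List V} {A : List V}

lemma Avail.ne_nil (h : Avail G (some m) d σ x A) : A ≠ [] := by
  rcases h with ⟨_, -, -, -, -, -, -, rfl⟩ | ⟨_, -, -, -, rfl⟩ <;> exact List.cons_ne_nil _ _

lemma Avail.perceivable (h : Avail G (some m) d σ x A) (hmd : m ≠ d) (hxm : x ≠ m)
    (hσ : ∀ n, n ≠ m → σ n ≠ [] → (σ n).length < A.length →
      Perceivable G (some m) d n (σ n)) :
    Perceivable G (some m) d x A := by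
  rcases h with ⟨n, hadj, hnm, hn, hhead, hx, hexp, rfl⟩ | ⟨_, ⟨⟩, hadj, hxd, rfl⟩
  · have hn := hσ n (hnm m rfl) hn (by simp)
    obtain ⟨t, ht⟩ := List.head?_eq_some_iff.1 hhead
    rw [ht] at hn hx hexp ⊢
    exact hn.cons hadj hx hxm hexp
  · exact perceivable_bogus hadj hxm hxd hmd

end Avail

namespace Stable

variable [Fintype V] {G : ASGraph V} {tb : V → List V → ℕ} {S : Finset V} {m d : V}
  {mdl : SecModel} {σ : V → List V}

lemma avail_self (hσ : Stable G tb S (some m) d mdl σ) {x : V} (hxd : x ≠ d) (hxm : x ≠ m)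
    (hx : σ x ≠ []) : Avail G (some m) d σ x (σ x) :=
  ((hσ.2.2 x hxd (by rintro _ ⟨⟩; exact hxm)).resolve_left fun h => hx h.1).1

lemma rankNat_le_of_avail (hσ : Stable G tb S (some m) d mdl σ) {x : V} (hxd : x ≠ d)
    (hxm : x ≠ m) {A : List V} (hA : Avail G (some m) d σ x A) :
    Avail G (some m) d σ x (σ x) ∧ rankNat G S (some m) mdl (σ x) ≤ rankNat G S (some m) mdl A := by
  obtain ⟨hself, hbest⟩ := (hσ.2.2 x hxd (by rintro _ ⟨⟩; exact hxm)).resolve_left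
    fun h => h.2 A hA
  refine ⟨hself, ?_⟩
  by_cases hAx : A = σ x
  · rw [hAx]
  · rcases hbest A hA hAx with hlt | ⟨heq, -⟩
    exacts [hlt.le, heq.le]

lemma perceivable (hσ : Stable G tb S (some m) d mdl σ) (hmd : m ≠ d) {x : V} (hxm : x ≠ m)
    (hx : σ x ≠ []) : Perceivable G (some m) d x (σ x) := by
  induction hk : (σ x).length using Nat.strong_induction_on generalizing x with
  | _ k ih =>
  by_cases hxd : x = d
  · subst hxd
    rw [hσ.1]
    exact perceivable_dest hmd
  · exact (hσ.avail_self hxd hxm hx).perceivable hmd hxm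
      fun n hnm hn hlt => ih _ (hk ▸ hlt) hnm hn rfl

lemma perceivable_of_avail (hσ : Stable G tb S (some m) d mdl σ) (hmd : m ≠ d) {x : V}
    (hxm : x ≠ m) {A : List V} (hA : Avail G (some m) d σ x A) : Perceivable G (some m) d x A :=
  hA.perceivable hmd hxm fun _ hnm hn _ => hσ.perceivable hmd hnm hn

/-- `σ x` is built hop by hop from the neighbours' selections, and by the export rule a
neighbour `n` announces `σ n` to its provider `x` only if `σ n` is a customer route; so being a
customer route propagates along `σ x` down to `σ s`. -/
lemma ne_nil_and_lpVal_eq_zero_of_mem (hσ : Stable G tb S (some m) d mdl σ) {x s : V}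
    (hxm : x ≠ m) (hsm : s ≠ m) (hs : s ∈ σ x) :
    σ s ≠ [] ∧ (lpVal G (σ x) = 0 → lpVal G (σ s) = 0) := by
  induction hk : (σ x).length using Nat.strong_induction_on generalizing x with
  | _ k ih =>
  by_cases hsx : s = x
  · subst hsx
    exact ⟨List.ne_nil_of_mem hs, id⟩
  by_cases hsd : s = d
  · subst hsd
    rw [hσ.1]
    exact ⟨List.cons_ne_nil _ _, fun _ => rfl⟩
  have hxd : x ≠ d := by
    rintro rfl
    rw [hσ.1] at hs
    exact hsd (List.mem_singleton.1 hs)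
  rcases hσ.avail_self hxd hxm (List.ne_nil_of_mem hs) with
    ⟨n, hadj, hnm, -, hhead, -, hexp, hσx⟩ | ⟨_, ⟨⟩, -, -, hσx⟩
  · rw [hσx] at hs hk ⊢
    have hsn : s ∈ σ n := (List.mem_cons.1 hs).resolve_left hsx
    obtain ⟨hs', hlp⟩ := ih _ (by simp [← hk]) (hnm m rfl) hsn rfl
    refine ⟨hs', fun h0 => hlp ?_⟩
    obtain ⟨t, ht⟩ := List.head?_eq_some_iff.1 hhead
    rw [ht] at h0 hexp ⊢
    have hxn : G.rel x n = Rel.customer := lpRank_eq_zero_iff.1 h0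
    refine lpVal_eq_zero_of_exportsTo hexp fun hnx => ?_
    rw [G.rel_eq_provider_of_rel_eq_customer hadj hnx] at hxn
    exact Rel.noConfusion hxn
  · rw [hσx] at hs
    simp [hsx, hsm, hsd] at hs

lemma lpVal_le_of_avail (hσ : Stable G tb S (some m) d mdl σ) (hmd : m ≠ d)
    (hmdl : mdl ≠ SecModel.first) {s : V} (hsd : s ≠ d) (hsm : s ≠ m) {A : List V}
    (hA : Avail G (some m) d σ s A) : σ s ≠ [] ∧ lpVal G (σ s) ≤ lpVal G A := by
  obtain ⟨hself, hle⟩ := hσ.rankNat_le_of_avail hsd hsm hA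
  exact ⟨hself.ne_nil,
    lpVal_le_of_rankNat_le hmdl (hσ.perceivable_of_avail hmd hsm hA).length_le hle⟩

lemma lpVal_le_lpRank (hσ : Stable G tb S (some m) d mdl σ) (hmd : m ≠ d)
    (hmdl : mdl ≠ SecModel.first) {s n : V} {t : List V} (hsd : s ≠ d) (hsm : s ≠ m)
    (hadj : G.adj s n = true) (hnm : n ≠ m) (hn : σ n ≠ [])
    (hle : lpVal G (σ n) ≤ lpVal G (n :: t)) (hexp : exportsTo G n s (n :: t)) :
    σ s ≠ [] ∧ lpVal G (σ s) ≤ lpRank (G.rel s n) := by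
  obtain ⟨u, hu⟩ := List.head?_eq_some_iff.1 (hσ.perceivable hmd hnm hn).1
  rw [hu] at hle
  have hexp' : exportsTo G n s (σ n) := hu ▸ exportsTo_of_lpVal_le hle hexp
  by_cases hmem : s ∈ σ n
  · obtain ⟨hs, hlp⟩ := hσ.ne_nil_and_lpVal_eq_zero_of_mem hnm hsm hmem
    refine ⟨hs, ?_⟩
    by_cases hprov : G.rel s n = Rel.provider
    · exact hprov ▸ lpVal_le_two G (σ s)
    · have hns : G.rel n s ≠ Rel.customer :=
        fun hc => hprov (G.rel_eq_provider_of_rel_eq_customer hadj hc)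
      rw [hu] at hexp' hlp
      rw [hlp (lpVal_eq_zero_of_exportsTo hexp' hns)]
      exact Nat.zero_le _
  · have hA : Avail G (some m) d σ s (s :: σ n) :=
      Or.inl ⟨n, hadj, by rintro _ ⟨⟩; exact hnm, hn, hu ▸ rfl, hmem, hexp', rfl⟩
    rw [hu] at hA
    exact hσ.lpVal_le_of_avail hmd hmdl hsd hsm hA

lemma lpVal_le_of_perceivable (hσ : Stable G tb S (some m) d mdl σ) (hmd : m ≠ d)
    (hmdl : mdl ≠ SecModel.first) {s : V} (hsm : s ≠ m) {R : List V}
    (hR : Perceivable G (some m) d s R) : σ s ≠ [] ∧ lpVal G (σ s) ≤ lpVal G R := by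
  induction hk : R.length using Nat.strong_induction_on generalizing s R with
  | _ k ih =>
  by_cases hsd : s = d
  · subst hsd
    rw [hR.eq_singleton_dest, hσ.1]
    exact ⟨List.cons_ne_nil _ _, le_rfl⟩
  rcases hR.cases_cons hsd hsm with ⟨n, t, rfl, hadj, hnm, hexp, hT⟩ | ⟨rfl, hadj⟩
  · obtain ⟨hn, hle⟩ := ih _ (by simp [← hk]) hnm hT rfl
    exact hσ.lpVal_le_lpRank hmd hmdl hsd hsm hadj hnm hn hle hexp
  · exact hσ.lpVal_le_of_avail hmd hmdl hsd hsm (Or.inr ⟨m, rfl, hadj, hsd, rfl⟩)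

end Stable

end

theorem second_model_type_invariant_general {V : Type*} [Fintype V]
    (G : ASGraph V) (tb : V → List V → ℕ)
    (m d : V) (hmd : m ≠ d) (S : Finset V)
    (σ : V → List V) (hσ : Stable G tb S (some m) d SecModel.second σ)
    (s : V) (hs : s ≠ m)
    (R : List V) (hR : BPR G ∅ (some m) d SecModel.second s R) :
    nextRel G (σ s) = nextRel G R := by
  obtain ⟨hRperc, hRbest⟩ := hR
  obtain ⟨hσs, hle⟩ := hσ.lpVal_le_of_perceivable hmd (by decide) hs hRperc
  have hσperc := hσ.perceivable hmd hs hσs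
  have hge := lpVal_le_of_rankNat_le (by decide) hσperc.length_le (hRbest _ hσperc)
  exact hσperc.nextRel_eq_of_lpVal_eq hRperc (le_antisymm hle hge)

/-- **Deployment-invariance of route type in the security second model.**
For any destination `d`, attacker `m`, source `s` and secure deployment `S`,
the stable route of `s` has the same relationship type (customer, peer or
provider) as every route in `BPR(s, ∅, m, d)`, the set of most-preferred
perceivable routes of `s` when no AS is secure. -/
theorem second_model_type_invariant {V : Type*} [Fintype V] [DecidableEq V]
    (G : ASGraph V) (tb : V → List V → ℕ) (hinj : InjTB tb)
    (m d : V) (hmd : m ≠ d) (S : Finset V)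
    (σ : V → List V) (hσ : Stable G tb S (some m) d SecModel.second σ)
    (s : V) (hs : s ≠ m)
    (R : List V) (hR : BPR G ∅ (some m) d SecModel.second s R) :
    nextRel G (σ s) = nextRel G R :=
  second_model_type_invariant_general G tb m d hmd S σ hσ s hs R hR

end SBGP
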